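/- arXiv:2103.13712 — 8 statements merged into one kernel-verified Lean document; each statement's English description precedes it below -/
import Mathlib

section
/- In a team formation model where utilities are strictly increasing in team membership (adding a project strictly increases the utility of each of its members), a feasible state is myopically team-wise stable if and only if it is maximal with respect to set inclusion among feasible states. -/
open scoped Classical

noncomputable section

namespace TF

/-- A state `x` (a finite set of projects) is feasible if each agent's total
time spent on projects in `x` is within her endowment. -/
def Feasible {N P : Type} (w : N → ℕ) (t : P → N → ℕ) (x : Finset P) : Prop :=
  ∀ i, (∑ p ∈ x, t p i) ≤ w i

/-- Assumption (v0): adding a feasible project strictly increases the utility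
of each of its members. -/
def V0 {N P : Type} (w : N → ℕ) (t : P → N → ℕ) (mem : P → Finset N)
    (u : N → Finset P → ℝ) : Prop :=
  ∀ (x : Finset P) (p : P), p ∉ x → Feasible w t x → Feasible w t (insert p x) →
    ∀ i ∈ mem p, u i x < u i (insert p x)

/-- Myopic team-wise stability. -/
def MTS {N P : Type} (w : N → ℕ) (t : P → N → ℕ) (mem : P → Finset N)
    (u : N → Finset P → ℝ) (x : Finset P) : Prop :=
  Feasible w t x ∧
  (∀ p ∈ x, ∀ i ∈ mem p, u i (x.erase p) ≤ u i x) ∧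
  ¬ ∃ p, p ∉ x ∧ Feasible w t (insert p x) ∧ ∀ i ∈ mem p, u i x < u i (insert p x)

/-- Maximal feasible states (the set `M`). -/
def MaximalState {N P : Type} (w : N → ℕ) (t : P → N → ℕ) (x : Finset P) : Prop :=
  Feasible w t x ∧ ∀ y, Feasible w t y → x ⊆ y → x = y

/-- Feasible states with the maximum number of projects (the set `L`). -/
def MaxProjects {N P : Type} (w : N → ℕ) (t : P → N → ℕ) (x : Finset P) : Prop :=
  Feasible w t x ∧ ∀ y, Feasible w t y → y.card ≤ x.card

/-- One (state-changing) step of the myopic team-wise dynamics: a feasible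
project is added. -/
def Step {N P : Type} (w : N → ℕ) (t : P → N → ℕ) (x y : Finset P) : Prop :=
  ∃ p, p ∉ x ∧ Feasible w t (insert p x) ∧ y = insert p x

def Accessible {N P : Type} (w : N → ℕ) (t : P → N → ℕ) :
    Finset P → Finset P → Prop :=
  Relation.ReflTransGen (Step w t)

/-- Absorbing states of the unperturbed myopic team-wise dynamics. -/
def Absorbing {N P : Type} (w : N → ℕ) (t : P → N → ℕ) (x : Finset P) : Prop :=
  ∀ y, ¬ Step w t x y

/-- Recurrent states: every state accessible from `x` can access `x` back. -/
def Recurrent {N P : Type} (w : N → ℕ) (t : P → N → ℕ) (x : Finset P) : Prop :=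
  ∀ y, Accessible w t x y → Accessible w t y x

/-- Resistance between absorbing states: `ℓ(x) - ℓ(x ∩ x')`. -/
def rstar {P : Type} (x y : Finset P) : ℕ := x.card - (x ∩ y).card

/-- An `root`-tree: a parent map on the absorbing (maximal) states, every
maximal state reaching the root by iteration. -/
def IsTree {N P : Type} (w : N → ℕ) (t : P → N → ℕ) (root : Finset P)
    (f : Finset P → Finset P) : Prop :=
  f root = root ∧
  ∀ y : Finset P, MaximalState w t y →
    MaximalState w t (f y) ∧ ∃ k : ℕ, f^[k] y = root

/-- Total resistance of a tree: sum of edge resistances. -/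
def treeRes {N P : Type} [Fintype P] (w : N → ℕ) (t : P → N → ℕ) (root : Finset P)
    (f : Finset P → Finset P) : ℕ :=
  ∑ y ∈ Finset.univ.filter (fun y : Finset P => MaximalState w t y ∧ y ≠ root),
    rstar y (f y)

/-- Stochastic potential: minimum resistance over trees rooted at `root`. -/
def potential {N P : Type} [Fintype P] (w : N → ℕ) (t : P → N → ℕ)
    (root : Finset P) : ℕ :=
  sInf { n : ℕ | ∃ f, IsTree w t root f ∧ treeRes w t root f = n }

/-- Stochastically stable states: absorbing (maximal) states of minimum
stochastic potential. -/
def StochStable {N P : Type} [Fintype P] (w : N → ℕ) (t : P → N → ℕ)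
    (x : Finset P) : Prop :=
  MaximalState w t x ∧
  ∀ y, MaximalState w t y → potential w t x ≤ potential w t y

/-- A blocking operation of state `x` by coalition `C`, destroying the
projects in `y` and forming the projects in `z`, with switching cost `c`
per exited project. -/
def Blocking {N P : Type} (w : N → ℕ) (t : P → N → ℕ) (mem : P → Finset N)
    (u : N → Finset P → ℝ) (c : ℝ) (x : Finset P) (C : Finset N)
    (y z : Finset P) : Prop :=
  C.Nonempty ∧ y ⊆ x ∧ (∀ p ∈ y, ∃ i ∈ C, i ∈ mem p) ∧
  (∀ p ∈ z, p ∉ x) ∧ (∀ p ∈ z, ∀ j ∈ mem p, j ∈ C) ∧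
  Feasible w t ((x \ y) ∪ z) ∧
  ∀ i ∈ C, u i x < u i ((x \ y) ∪ z) - c * ((y.filter (fun p => i ∈ mem p)).card : ℝ)

/-- Coalitionally stable states with switching cost `c`. -/
def CSc {N P : Type} (w : N → ℕ) (t : P → N → ℕ) (mem : P → Finset N)
    (u : N → Finset P → ℝ) (c : ℝ) (x : Finset P) : Prop :=
  Feasible w t x ∧ ¬ ∃ C y z, Blocking w t mem u c x C y z

/-- One (state-changing) step of the coalition-wise dynamics with cost `c`. -/
def CStep {N P : Type} (w : N → ℕ) (t : P → N → ℕ) (mem : P → Finset N)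
    (u : N → Finset P → ℝ) (c : ℝ) (x x' : Finset P) : Prop :=
  ∃ C y z, Blocking w t mem u c x C y z ∧ x' = (x \ y) ∪ z

def CAccessible {N P : Type} (w : N → ℕ) (t : P → N → ℕ) (mem : P → Finset N)
    (u : N → Finset P → ℝ) (c : ℝ) : Finset P → Finset P → Prop :=
  Relation.ReflTransGen (CStep w t mem u c)

def CAbsorbing {N P : Type} (w : N → ℕ) (t : P → N → ℕ) (mem : P → Finset N)
    (u : N → Finset P → ℝ) (c : ℝ) (x : Finset P) : Prop :=
  ∀ x', ¬ CStep w t mem u c x x'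

def CRecurrent {N P : Type} (w : N → ℕ) (t : P → N → ℕ) (mem : P → Finset N)
    (u : N → Finset P → ℝ) (c : ℝ) (x : Finset P) : Prop :=
  ∀ y, CAccessible w t mem u c x y → CAccessible w t mem u c y x

/-- There is a (one-step) improving path from `x` to `x'`. -/
def ImprovesTo {N P : Type} (w : N → ℕ) (t : P → N → ℕ) (mem : P → Finset N)
    (u : N → Finset P → ℝ) (x x' : Finset P) : Prop :=
  ∃ C y z, Blocking w t mem u 0 x C y z ∧ x' = (x \ y) ∪ z

/-- The set `F(x)` of states reachable from `x` along a one-step improving path. -/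
def FSet {N P : Type} (w : N → ℕ) (t : P → N → ℕ) (mem : P → Finset N)
    (u : N → Finset P → ℝ) (x : Finset P) : Set (Finset P) :=
  { x' | ImprovesTo w t mem u x x' }

/-- Perturbed reachability: additions of feasible projects are free, while
each deletion of an existing project costs one perturbation. -/
inductive PReach {N P : Type} (w : N → ℕ) (t : P → N → ℕ) :
    Finset P → Finset P → ℕ → Prop
  | refl (x : Finset P) : PReach w t x x 0
  | add {x y : Finset P} {p : P} {n : ℕ} (hp : p ∉ x)
      (hf : Feasible w t (insert p x)) (h : PReach w t (insert p x) y n) :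
      PReach w t x y n
  | del {x y : Finset P} {p : P} {n : ℕ} (hp : p ∈ x)
      (h : PReach w t (x.erase p) y n) : PReach w t x y (n + 1)


lemma feasible_subset {N P : Type} (w : N → ℕ) (t : P → N → ℕ)
    {x y : Finset P} (h : x ⊆ y) (hy : Feasible w t y) : Feasible w t x := by
  intro i
  exact le_trans (Finset.sum_le_sum_of_subset h) (hy i)

/-- Under Assumption (v0), a feasible state is myopically team-wise stable
iff it is maximal with respect to set inclusion among feasible states. -/
theorem mts_iff_maximal {N P : Type} (w : N → ℕ) (t : P → N → ℕ)
    (mem : P → Finset N) (u : N → Finset P → ℝ) (hv0 : V0 w t mem u) :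
    ∀ x : Finset P, MTS w t mem u x ↔ MaximalState w t x := by
  intro x
  constructor
  · rintro ⟨hf, _, hno⟩
    refine ⟨hf, fun y hy hxy => ?_⟩
    by_contra hne
    obtain ⟨p, hpy, hpx⟩ := Finset.exists_of_ssubset (lt_of_le_of_ne hxy hne)
    have hins : Feasible w t (insert p x) :=
      feasible_subset w t (Finset.insert_subset hpy hxy) hy
    exact hno ⟨p, hpx, hins, fun i hi => hv0 x p hpx hf hins i hi⟩
  · rintro ⟨hf, hmax⟩
    refine ⟨hf, fun p hp i hi => ?_, ?_⟩
    · have hef : Feasible w t (x.erase p) :=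
        feasible_subset w t (Finset.erase_subset p x) hf
      have hins : insert p (x.erase p) = x := Finset.insert_erase hp
      have := hv0 (x.erase p) p (Finset.notMem_erase p x) hef (by rw [hins]; exact hf) i hi
      rw [hins] at this
      exact this.le
    · rintro ⟨p, hpx, hins, _⟩
      have := hmax (insert p x) hins (Finset.subset_insert p x)
      exact hpx (this ▸ Finset.mem_insert_self p x)
end TF
end
end

section
/- There exists a team formation model (with four agents, endowments all equal to 2, and projects of size two over a path of allowed pairs) that has a maximal feasible state that does not maximize the number of projects; hence the inclusion L ⊆ M can be strict. -/
open scoped Classical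

noncomputable section

namespace TF

/-- Concrete example: four agents `{i,j,k,m}` with endowments all `2`, two
activities, and pair-projects over the path `{i,j}, {j,k}, {k,m}`.  The state
where both activities are done by the pair `{j,k}` is maximal but does not
maximize the number of projects (the four-project state where each activity is
done by `{i,j}` and `{k,m}` is feasible); hence `M ⊄ L`. -/
theorem maximal_not_maxProjects_example :
    let pairmem : Fin 3 → Finset (Fin 4) :=
      ![({0, 1} : Finset (Fin 4)), {1, 2}, {2, 3}]
    let mem : Fin 2 × Fin 3 → Finset (Fin 4) := fun p => pairmem p.2
    let t : Fin 2 × Fin 3 → Fin 4 → ℕ := fun p i => if i ∈ mem p then 1 else 0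
    let w : Fin 4 → ℕ := fun _ => 2
    let x : Finset (Fin 2 × Fin 3) := {(0, 1), (1, 1)}
    let y : Finset (Fin 2 × Fin 3) := {(0, 0), (1, 0), (0, 2), (1, 2)}
    MaximalState w t x ∧ Feasible w t y ∧ x.card < y.card ∧
      ¬ MaxProjects w t x := by
  unfold MaximalState MaxProjects Feasible
  refine ⟨?_, ?_, ?_, ?_⟩ <;> decide
end TF
end
end

section
/- In the myopic team-wise dynamics with a uniform destructive perturbation scheme, for any two absorbing (maximal) states x and x', the minimal number of perturbations needed to move from x to x' equals ℓ(x) − ℓ(x ∩ x'), where ℓ counts projects. -/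
open scoped Classical

noncomputable section

namespace TF

lemma feas_mono {N P : Type} (w : N → ℕ) (t : P → N → ℕ) {s r : Finset P}
    (hsr : s ⊆ r) (hr : Feasible w t r) : Feasible w t s := fun i =>
  le_trans (Finset.sum_le_sum_of_subset hsr) (hr i)

lemma preach_trans {N P : Type} {w : N → ℕ} {t : P → N → ℕ} {x y z : Finset P} {m n : ℕ}
    (h1 : PReach w t x y m) (h2 : PReach w t y z n) : PReach w t x z (m + n) := by
  induction h1 with
  | refl => simpa using h2
  | add hp hf h ih => exact PReach.add hp hf (ih h2)
  | del hp h ih =>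
      have := PReach.del hp (ih h2)
      simpa [Nat.add_right_comm] using this

lemma delSeq {N P : Type} (w : N → ℕ) (t : P → N → ℕ) :
    ∀ d y : Finset P, d ⊆ y → PReach w t y (y \ d) d.card := by
  intro d
  induction d using Finset.induction with
  | empty => intro y _; simpa using PReach.refl y
  | @insert p d hpd ih =>
      intro y hdy
      have hpy : p ∈ y := hdy (Finset.mem_insert_self _ _)
      have hdy' : d ⊆ y.erase p := by
        intro q hq
        exact Finset.mem_erase.2 ⟨fun h => hpd (h ▸ hq), hdy (Finset.mem_insert_of_mem hq)⟩
      have h := ih (y.erase p) hdy'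
      have heq : (y.erase p) \ d = y \ insert p d := by
        ext q
        simp only [Finset.mem_sdiff, Finset.mem_erase, Finset.mem_insert]
        tauto
      rw [heq] at h
      have := PReach.del hpy h
      simpa [Finset.card_insert_of_notMem hpd] using this

lemma addSeq {N P : Type} (w : N → ℕ) (t : P → N → ℕ) {x' : Finset P}
    (hx' : Feasible w t x') :
    ∀ m : ℕ, ∀ s : Finset P, s ⊆ x' → (x' \ s).card = m → PReach w t s x' 0 := by
  intro m
  induction m with
  | zero =>
      intro s hs hc
      have : x' \ s = ∅ := Finset.card_eq_zero.1 hc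
      have hx's : x' ⊆ s := by
        intro q hq
        by_contra hqs
        exact (Finset.notMem_empty q) (this ▸ Finset.mem_sdiff.2 ⟨hq, hqs⟩)
      have : s = x' := Finset.Subset.antisymm hs hx's
      exact this ▸ PReach.refl s
  | succ m ih =>
      intro s hs hc
      obtain ⟨p, hp⟩ : (x' \ s).Nonempty := Finset.card_pos.1 (by omega)
      obtain ⟨hpx', hps⟩ := Finset.mem_sdiff.1 hp
      have hins : insert p s ⊆ x' := Finset.insert_subset hpx' hs
      refine PReach.add hps (feas_mono w t hins hx') (ih (insert p s) hins ?_)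
      rw [Finset.sdiff_insert, Finset.card_erase_of_mem hp]
      omega

lemma preach_lb {N P : Type} {w : N → ℕ} {t : P → N → ℕ} {y z : Finset P} {n : ℕ}
    (h : PReach w t y z n) : (y \ z).card ≤ n := by
  induction h with
  | refl => simp
  | @add x y p n hp hf h ih =>
      exact le_trans (Finset.card_le_card
        (Finset.sdiff_subset_sdiff (Finset.subset_insert p x) (le_refl _))) ih
  | @del x y p n hp h ih =>
      have hsub : x \ y ⊆ insert p ((x.erase p) \ y) := by
        intro q hq
        obtain ⟨hqx, hqy⟩ := Finset.mem_sdiff.1 hq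
        by_cases hqp : q = p
        · exact Finset.mem_insert.2 (Or.inl hqp)
        · exact Finset.mem_insert.2 (Or.inr (Finset.mem_sdiff.2
            ⟨Finset.mem_erase.2 ⟨hqp, hqx⟩, hqy⟩))
      calc (x \ y).card ≤ (insert p ((x.erase p) \ y)).card := Finset.card_le_card hsub
        _ ≤ ((x.erase p) \ y).card + 1 := Finset.card_insert_le _ _
        _ ≤ n + 1 := by omega

/-- In the myopic team-wise dynamics with a uniform destructive perturbation
scheme, for any two absorbing (maximal) states `x` and `x'`, the minimal
number of perturbations needed to move from `x` to `x'` equals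
`ℓ(x) − ℓ(x ∩ x')`. -/
theorem resistance_eq {N P : Type} (w : N → ℕ) (t : P → N → ℕ)
    (mem : P → Finset N) (u : N → Finset P → ℝ) (hv0 : V0 w t mem u) :
    ∀ x x' : Finset P, MaximalState w t x → MaximalState w t x' →
      IsLeast { n : ℕ | PReach w t x x' n } (x.card - (x ∩ x').card) := by
  intro x x' hx hx'
  have hcard : (x \ x').card = x.card - (x ∩ x').card := by
    have := Finset.card_inter_add_card_sdiff x x'
    omega
  constructor
  · -- membership
    have h1 : PReach w t x (x ∩ x') (x \ x').card := by
      have := delSeq w t (x \ x') x Finset.sdiff_subset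
      simpa [Finset.sdiff_sdiff_self_left] using this
    have h2 : PReach w t (x ∩ x') x' 0 :=
      addSeq w t hx'.1 _ _ Finset.inter_subset_right rfl
    have := preach_trans h1 h2
    simpa [hcard] using this
  · -- lower bound
    intro n hn
    have := preach_lb hn
    omega
end TF
end
end

section
/- Given the resistance function r*(x, x') = ℓ(x) − ℓ(x ∩ x') between absorbing states, if ℓ(x') > ℓ(x) then the stochastic potential of x' is strictly less than the stochastic potential of x; and if ℓ(x') = ℓ(x) then they have equal stochastic potential. -/
/-!
Encode an `x`-tree by its parent map `f` (with `f x = x`). If `y` is a child of the root `x`,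
redirecting the edge `y → x` to `x → y` turns it into a `y`-tree and replaces `r y x` by `r x y`
in its resistance; since `r y x + ℓ x = r x y + ℓ y`, the quantity `resistance + ℓ(root)` is
unchanged. Repeating this along the path from `x'` to `x` gives an `x'`-tree `g` with
`resistance g + ℓ x' = resistance f + ℓ x`, whence `γ x' + ℓ x' ≤ γ x + ℓ x` for all `x, x'`, and both claims
follow by symmetry.
-/

open scoped Classical

open Finset Function

namespace StochasticPotential

variable {A : Type}

theorem iterate_eq_of_eq_on_orbit {f g : A → A} {a : A} {n : ℕ}
    (h : ∀ i < n, g (f^[i] a) = f (f^[i] a)) : g^[n] a = f^[n] a := by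
  induction n with
  | zero => rfl
  | succ n ih =>
    rw [iterate_succ_apply', iterate_succ_apply', ih fun i hi => h i (by omega), h n (by omega)]

theorem iterate_eq_of_le_of_isFixedPt {f : A → A} {a x : A} {i k : ℕ} (hx : f x = x)
    (hi : f^[i] a = x) (hik : i ≤ k) : f^[k] a = x := by
  rw [← Nat.sub_add_cancel hik, iterate_add_apply, hi, iterate_fixed hx]

/-- `f` is the parent map of a spanning tree directed towards the root `x`. -/
def IsInTree (f : A → A) (x : A) : Prop :=
  f x = x ∧ ∀ y, ∃ k, f^[k] y = x

theorem IsInTree.induction {f : A → A} {x : A} (hf : IsInTree f x) {P : A → Prop} (hx : P x)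
    (hstep : ∀ z, z ≠ x → P (f z) → P z) (z : A) : P z := by
  obtain ⟨k, hk⟩ := hf.2 z
  induction k generalizing z with
  | zero => exact (show z = x from hk) ▸ hx
  | succ k ih =>
    by_cases hz : z = x
    · exact hz ▸ hx
    · exact hstep z hz (ih (f z) hk)

def reroot [DecidableEq A] (f : A → A) (x y : A) : A → A :=
  update (update f x y) y y

theorem IsInTree.reroot [DecidableEq A] {f : A → A} {x y : A} (hf : IsInTree f x) :
    IsInTree (reroot f x y) y := by
  refine ⟨by simp [StochasticPotential.reroot], hf.induction ⟨1, ?_⟩ fun z hzx ⟨k, hk⟩ => ?_⟩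
  · by_cases hxy : x = y <;> simp [StochasticPotential.reroot, hxy]
  · by_cases hzy : z = y
    · exact ⟨0, hzy⟩
    · exact ⟨k + 1, by simpa [StochasticPotential.reroot, hzx, hzy] using hk⟩

variable {ℓ : A → ℕ} {r : A → A → ℕ}

theorem resistance_add_level_comm {cap : A → A → ℕ} (hsymm : ∀ x y, cap x y = cap y x)
    (hle : ∀ x y, cap x y ≤ ℓ x) (hr : ∀ x y, r x y = ℓ x - cap x y) (y z : A) :
    r y z + ℓ z = r z y + ℓ y := by
  have := hle y z
  have := hle z y
  have := hsymm y z
  rw [hr, hr]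
  omega

variable [Fintype A]

noncomputable def resistance (r : A → A → ℕ) (f : A → A) (x : A) : ℕ :=
  ∑ y ∈ univ.filter (fun y : A => y ≠ x), r y (f y)

theorem resistance_reroot_add {f : A → A} {x y : A} (hyx : y ≠ x) (hfy : f y = x) :
    resistance r (reroot f x y) y + r y x = resistance r f x + r x y := by
  have hoff : ∀ z ∈ (univ.erase x).erase y, reroot f x y z = f z := fun z hz => by
    simp only [mem_erase] at hz
    simp [StochasticPotential.reroot, hz.1, hz.2.1]
  have hsplit : ∀ {u v : A}, u ≠ v → ∀ g : A → A,
      ∑ z ∈ univ.erase v, r z (g z) = r u (g u) + ∑ z ∈ (univ.erase v).erase u, r z (g z) :=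
    fun huv g => (add_sum_erase _ (fun z => r z (g z)) (mem_erase.2 ⟨huv, mem_univ _⟩)).symm
  simp only [resistance, filter_ne']
  rw [hsplit hyx.symm, hsplit hyx, erase_right_comm,
    sum_congr rfl fun z hz => congrArg (r z) (hoff z hz)]
  simp only [StochasticPotential.reroot, hfy, update_self, update_of_ne hyx.symm]
  omega

theorem resistance_reroot_add_level (hlevel : ∀ y z, r y z + ℓ z = r z y + ℓ y)
    {f : A → A} {x y : A} (hyx : y ≠ x) (hfy : f y = x) :
    resistance r (reroot f x y) y + ℓ y = resistance r f x + ℓ x := by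
  have := resistance_reroot_add (r := r) hyx hfy
  have := hlevel y x
  omega

theorem exists_isInTree_resistance_add_level (hlevel : ∀ y z, r y z + ℓ z = r z y + ℓ y)
    {f : A → A} {x : A} (hf : IsInTree f x) (x' : A) :
    ∃ g, IsInTree g x' ∧ resistance r g x' + ℓ x' = resistance r f x + ℓ x := by
  obtain ⟨k, hk⟩ := hf.2 x'
  induction k generalizing f x with
  | zero =>
    obtain rfl : x' = x := hk
    exact ⟨f, hf, rfl⟩
  | succ k ih =>
    set y := f^[k] x' with hy
    have hfy : f y = x := by rw [hy, ← iterate_succ_apply' f k x', hk]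
    by_cases hyx : y = x
    · exact ih hf hyx
    -- Before step `k` the path from `x'` avoids `x` and `y`, where `reroot` differs from `f`.
    have hpath : ∀ i < k, reroot f x y (f^[i] x') = f (f^[i] x') := by
      intro i hi
      have hne : ∀ j ≤ k, f^[j] x' ≠ x := fun j hj hj' =>
        hyx (iterate_eq_of_le_of_isFixedPt hf.1 hj' hj)
      have hix : f^[i] x' ≠ x := hne i hi.le
      have hiy : f^[i] x' ≠ y := fun h => hne (i + 1) hi (by rw [iterate_succ_apply', h, hfy])
      simp [StochasticPotential.reroot, hix, hiy]
    obtain ⟨g, hg, hres⟩ :=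
      ih hf.reroot (by rw [iterate_eq_of_eq_on_orbit hpath])
    exact ⟨g, hg, hres.trans (resistance_reroot_add_level hlevel hyx hfy)⟩

noncomputable def potential (r : A → A → ℕ) (x : A) : ℕ :=
  sInf {n | ∃ f, IsInTree f x ∧ resistance r f x = n}

theorem potential_add_level_le (hlevel : ∀ y z, r y z + ℓ z = r z y + ℓ y) (x x' : A) :
    potential r x' + ℓ x' ≤ potential r x + ℓ x := by
  obtain ⟨f, hf, hfx⟩ : potential r x ∈ {n | ∃ f, IsInTree f x ∧ resistance r f x = n} :=
    Nat.sInf_mem ⟨_, fun _ => x, ⟨rfl, fun _ => ⟨1, rfl⟩⟩, rfl⟩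
  obtain ⟨g, hg, hgx⟩ := exists_isInTree_resistance_add_level hlevel hf x'
  have : potential r x' ≤ resistance r g x' := Nat.sInf_le ⟨g, hg, rfl⟩
  omega

end StochasticPotential

open StochasticPotential in
theorem potential_lt_of_card_gt_general {A : Type} [Fintype A]
    (ℓ : A → ℕ) (cap : A → A → ℕ) (r : A → A → ℕ)
    (hsymm : ∀ x y, cap x y = cap y x)
    (hle : ∀ x y, cap x y ≤ ℓ x)
    (hr : ∀ x y, r x y = ℓ x - cap x y)
    (γ : A → ℕ)
    (hγ : ∀ x : A, γ x =
      sInf { n : ℕ | ∃ f : A → A, f x = x ∧ (∀ y : A, ∃ k : ℕ, f^[k] y = x) ∧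
        (∑ y ∈ Finset.univ.filter (fun y : A => y ≠ x), r y (f y)) = n }) :
    ∀ x x' : A, (ℓ x < ℓ x' → γ x' < γ x) ∧ (ℓ x = ℓ x' → γ x = γ x') := by
  obtain rfl : γ = potential r := funext fun x => by
    simp only [hγ x, potential, IsInTree, resistance, and_assoc]
  have hlevel := resistance_add_level_comm hsymm hle hr
  intro x x'
  have := potential_add_level_le hlevel x x'
  have := potential_add_level_le hlevel x' x
  exact ⟨fun _ => by omega, fun _ => by omega⟩

/-- Given a resistance function `r(x,x') = ℓ(x) − ℓ(x ∩ x')` between absorbing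
states (with `cap x y` playing the role of `ℓ(x ∩ y)`: symmetric and at most
`ℓ` of either argument), the stochastic potential `γ` (minimum total
resistance over directed spanning trees toward the root) satisfies: if
`ℓ(x') > ℓ(x)` then `γ(x') < γ(x)`, and if `ℓ(x') = ℓ(x)` then
`γ(x') = γ(x)`. -/
theorem potential_lt_of_card_gt {A : Type} [Fintype A] [Nonempty A]
    (ℓ : A → ℕ) (cap : A → A → ℕ) (r : A → A → ℕ)
    (hsymm : ∀ x y, cap x y = cap y x)
    (hle : ∀ x y, cap x y ≤ ℓ x)
    (hr : ∀ x y, r x y = ℓ x - cap x y)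
    (γ : A → ℕ)
    (hγ : ∀ x : A, γ x =
      sInf { n : ℕ | ∃ f : A → A, f x = x ∧ (∀ y : A, ∃ k : ℕ, f^[k] y = x) ∧
        (∑ y ∈ Finset.univ.filter (fun y : A => y ≠ x), r y (f y)) = n }) :
    ∀ x x' : A, (ℓ x < ℓ x' → γ x' < γ x) ∧ (ℓ x = ℓ x' → γ x = γ x') :=
  potential_lt_of_card_gt_general ℓ cap r hsymm hle hr γ hγ
end

section
/- Under Assumption (v1) (the total utility of any state equals its number of projects), every stochastically stable state of the team formation model is Pareto efficient. -/
open scoped Classical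

noncomputable section

namespace TF

section ParetoAux

variable {N P : Type} [Fintype P] (w : N → ℕ) (t : P → N → ℕ)

/-- Every feasible state extends to a maximal feasible state. -/
lemma exists_maximal_ext (s : Finset P) (hs : Feasible w t s) :
    ∃ m, s ⊆ m ∧ MaximalState w t m := by
  classical
  obtain ⟨m, hm, hmax⟩ :=
    (Finset.univ.filter fun z : Finset P => Feasible w t z ∧ s ⊆ z).exists_max_image
      Finset.card ⟨s, by simp [hs]⟩
  simp only [Finset.mem_filter, Finset.mem_univ, true_and] at hm
  refine ⟨m, hm.2, hm.1, fun z hz hmz => ?_⟩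
  refine Finset.eq_of_subset_of_card_le hmz (hmax z ?_)
  simp only [Finset.mem_filter, Finset.mem_univ, true_and]
  exact ⟨hz, hm.2.trans hmz⟩

lemma rstar_cast (a b : Finset P) :
    (rstar a b : ℤ) = (a.card : ℤ) - ((a ∩ b).card : ℤ) := by
  have : (a ∩ b).card ≤ a.card := Finset.card_le_card Finset.inter_subset_left
  rw [rstar]
  omega

/-- Tree surgery: given a tree rooted at `x` and another maximal state `xs`,
reversing the path from `xs` to `x` gives a tree rooted at `xs` whose total
resistance differs by exactly `|x| - |xs|`. -/
lemma reroute_tree (x xs : Finset P) (hxs : MaximalState w t xs) (hne : xs ≠ x)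
    (f : Finset P → Finset P) (hT : IsTree w t x f) :
    ∃ g, IsTree w t xs g ∧
      (treeRes w t xs g : ℤ) + (xs.card : ℤ) = (treeRes w t x f : ℤ) + (x.card : ℤ) := by
  classical
  set y : ℕ → Finset P := fun i => f^[i] xs with hy
  have hex : ∃ k, f^[k] xs = x := (hT.2 xs hxs).2
  set k := Nat.find hex with hkdef
  have hk : y k = x := Nat.find_spec hex
  have hy0 : y 0 = xs := rfl
  have hmin : ∀ m, m < k → y m ≠ x := fun m hm => Nat.find_min hex hm
  have hymax : ∀ i, MaximalState w t (y i) := by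
    intro i
    induction i with
    | zero => exact hxs
    | succ n ih =>
      have h := (hT.2 _ ih).1
      simpa [hy, Function.iterate_succ_apply'] using h
  have hinj : ∀ i, i ≤ k → ∀ j, j ≤ k → y i = y j → i = j := by
    have key : ∀ i j, i < j → j ≤ k → y i ≠ y j := by
      intro i j hij hjk heq
      have h1 : y (k - j + i) = x := by
        have h2 : f^[k - j] (y j) = x := by
          rw [hy]
          simp only
          rw [← Function.iterate_add_apply]
          rw [show k - j + j = k by omega]
          exact hk
        rw [← heq, hy] at h2
        simp only at h2
        rw [← Function.iterate_add_apply] at h2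
        exact h2
      exact hmin _ (by omega) h1
    intro i hi j hj heq
    rcases lt_trichotomy i j with h | h | h
    · exact absurd heq (key i j h hj)
    · exact h
    · exact absurd heq.symm (key j i h hi)
  have hkpos : 0 < k := by
    rcases Nat.eq_zero_or_pos k with h | h
    · have hyx : y 0 = x := by rw [← h]; exact hk
      rw [hy0] at hyx
      exact absurd hyx hne
    · exact h
  -- the rerouted tree
  set g : Finset P → Finset P := fun z =>
    if h : ∃ i, i < k ∧ z = y (i + 1) then y (Nat.find h)
    else if z = xs then xs else f z with hg
  have hg_xs : g xs = xs := by
    have hnot : ¬ ∃ i, i < k ∧ xs = y (i + 1) := by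
      rintro ⟨i, hi, hieq⟩
      have := hinj 0 (by omega) (i + 1) (by omega) (by rw [hy0]; exact hieq)
      omega
    rw [hg]
    simp only [dif_neg hnot]
    simp
  have hg_path : ∀ j, j < k → g (y (j + 1)) = y j := by
    intro j hj
    have hh : ∃ i, i < k ∧ y (j + 1) = y (i + 1) := ⟨j, hj, rfl⟩
    have hfind : Nat.find hh = j := by
      have hspec := Nat.find_spec hh
      have := hinj (Nat.find hh + 1) (by omega) (j + 1) (by omega) hspec.2.symm
      omega
    rw [hg]
    simp only [dif_pos hh, hfind]
  have hg_off : ∀ z, (∀ i, i ≤ k → z ≠ y i) → g z = f z := by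
    intro z hz
    have h1 : ¬ ∃ i, i < k ∧ z = y (i + 1) := by
      rintro ⟨i, hi, rfl⟩
      exact hz (i + 1) (by omega) rfl
    have h2 : z ≠ xs := by rw [← hy0]; exact hz 0 (by omega)
    rw [hg]
    simp only [dif_neg h1, if_neg h2]
  have hA : ∀ j, j ≤ k → g^[j] (y j) = xs := by
    intro j
    induction j with
    | zero => intro _; exact hy0
    | succ j ih =>
      intro hj
      rw [Function.iterate_succ_apply, hg_path j (by omega)]
      exact ih (by omega)
  have hB : ∀ m z, f^[m] z = x → ∃ n, g^[n] z = xs := by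
    intro m
    induction m with
    | zero =>
      intro z hz
      simp only [Function.iterate_zero_apply] at hz
      subst hz
      exact ⟨k, by rw [← hk] at *; exact hA k le_rfl⟩
    | succ m ih =>
      intro z hz
      by_cases hzy : ∃ j, j ≤ k ∧ z = y j
      · obtain ⟨j, hj, rfl⟩ := hzy
        exact ⟨j, hA j hj⟩
      · have hoff : g z = f z := hg_off z (fun i hi hzi => hzy ⟨i, hi, hzi⟩)
        obtain ⟨n, hn⟩ := ih (f z) (by rw [← Function.iterate_succ_apply]; exact hz)
        exact ⟨n + 1, by rw [Function.iterate_succ_apply, hoff, hn]⟩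
  have hgmax : ∀ z, MaximalState w t z → MaximalState w t (g z) := by
    intro z hz
    by_cases h1 : ∃ i, i < k ∧ z = y (i + 1)
    · rw [hg]; simp only [dif_pos h1]; exact hymax _
    · by_cases h2 : z = xs
      · rw [hg]; simp only [dif_neg h1, if_pos h2]; exact hxs
      · rw [hg]; simp only [dif_neg h1, if_neg h2]; exact (hT.2 z hz).1
  have hgtree : IsTree w t xs g := by
    refine ⟨hg_xs, fun z hz => ⟨hgmax z hz, ?_⟩⟩
    obtain ⟨m, hm⟩ := (hT.2 z hz).2
    exact hB m z hm
  refine ⟨g, hgtree, ?_⟩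
  -- now the resistance computation
  set Q : Finset (Finset P) := (Finset.range (k + 1)).image y with hQ
  have hxsQ : xs ∈ Q := by
    rw [hQ]
    exact Finset.mem_image.2 ⟨0, Finset.mem_range.2 (by omega), hy0⟩
  have hxQ : x ∈ Q := by
    rw [hQ]
    exact Finset.mem_image.2 ⟨k, Finset.mem_range.2 (by omega), hk⟩
  have hQmax : ∀ z ∈ Q, MaximalState w t z := by
    intro z hz
    rw [hQ] at hz
    obtain ⟨i, _, rfl⟩ := Finset.mem_image.1 hz
    exact hymax i
  set Ag : Finset (Finset P) :=
    Finset.univ.filter (fun z : Finset P => MaximalState w t z ∧ z ≠ xs) with hAg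
  set Af : Finset (Finset P) :=
    Finset.univ.filter (fun z : Finset P => MaximalState w t z ∧ z ≠ x) with hAf
  have hsplitg : (treeRes w t xs g : ℤ) =
      (∑ z ∈ Ag \ Q, (rstar z (g z) : ℤ)) + ∑ z ∈ Ag ∩ Q, (rstar z (g z) : ℤ) := by
    rw [treeRes, ← hAg]
    push_cast
    rw [← Finset.sum_inter_add_sum_sdiff Ag Q (fun z => (rstar z (g z) : ℤ))]
    ring
  have hsplitf : (treeRes w t x f : ℤ) =
      (∑ z ∈ Af \ Q, (rstar z (f z) : ℤ)) + ∑ z ∈ Af ∩ Q, (rstar z (f z) : ℤ) := by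
    rw [treeRes, ← hAf]
    push_cast
    rw [← Finset.sum_inter_add_sum_sdiff Af Q (fun z => (rstar z (f z) : ℤ))]
    ring
  have hdiffeq : Ag \ Q = Af \ Q := by
    ext z
    simp only [hAg, hAf, Finset.mem_sdiff, Finset.mem_filter, Finset.mem_univ, true_and]
    constructor
    · rintro ⟨⟨h1, _⟩, h3⟩
      exact ⟨⟨h1, fun e => h3 (e ▸ hxQ)⟩, h3⟩
    · rintro ⟨⟨h1, _⟩, h3⟩
      exact ⟨⟨h1, fun e => h3 (e ▸ hxsQ)⟩, h3⟩
  have hoffsum : ∀ z ∈ Ag \ Q, (rstar z (g z) : ℤ) = (rstar z (f z) : ℤ) := by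
    intro z hz
    rw [Finset.mem_sdiff] at hz
    have : g z = f z := by
      refine hg_off z (fun i hi hzi => hz.2 ?_)
      rw [hQ]
      exact Finset.mem_image.2 ⟨i, Finset.mem_range.2 (by omega), hzi.symm⟩
    rw [this]
  have hAgQ : Ag ∩ Q = (Finset.range k).image (fun i => y (i + 1)) := by
    ext z
    simp only [hAg, Finset.mem_inter, Finset.mem_filter, Finset.mem_univ, true_and,
      Finset.mem_image, Finset.mem_range]
    constructor
    · rintro ⟨⟨_, hzxs⟩, hzQ⟩
      rw [hQ] at hzQ
      obtain ⟨i, hi, rfl⟩ := Finset.mem_image.1 hzQ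
      rw [Finset.mem_range] at hi
      rcases Nat.eq_zero_or_pos i with h0 | h0
      · exact absurd (h0 ▸ hy0 : y i = xs) hzxs
      · exact ⟨i - 1, by omega, by rw [show i - 1 + 1 = i by omega]⟩
    · rintro ⟨i, hi, rfl⟩
      refine ⟨⟨hymax _, fun e => ?_⟩, ?_⟩
      · have := hinj (i + 1) (by omega) 0 (by omega) (by rw [hy0]; exact e)
        omega
      · rw [hQ]
        exact Finset.mem_image.2 ⟨i + 1, Finset.mem_range.2 (by omega), rfl⟩
  have hAfQ : Af ∩ Q = (Finset.range k).image y := by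
    ext z
    simp only [hAf, Finset.mem_inter, Finset.mem_filter, Finset.mem_univ, true_and,
      Finset.mem_image, Finset.mem_range]
    constructor
    · rintro ⟨⟨_, hzx⟩, hzQ⟩
      rw [hQ] at hzQ
      obtain ⟨i, hi, rfl⟩ := Finset.mem_image.1 hzQ
      rw [Finset.mem_range] at hi
      rcases Nat.lt_or_ge i k with h0 | h0
      · exact ⟨i, h0, rfl⟩
      · have : i = k := by omega
        exact absurd (this ▸ hk : y i = x) hzx
    · rintro ⟨i, hi, rfl⟩
      refine ⟨⟨hymax _, hmin i hi⟩, ?_⟩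
      rw [hQ]
      exact Finset.mem_image.2 ⟨i, Finset.mem_range.2 (by omega), rfl⟩
  have hinj1 : ∀ a ∈ Finset.range k, ∀ b ∈ Finset.range k,
      y (a + 1) = y (b + 1) → a = b := by
    intro a ha b hb hab
    rw [Finset.mem_range] at ha hb
    have := hinj (a + 1) (by omega) (b + 1) (by omega) hab
    omega
  have hinj2 : ∀ a ∈ Finset.range k, ∀ b ∈ Finset.range k, y a = y b → a = b := by
    intro a ha b hb hab
    rw [Finset.mem_range] at ha hb
    exact hinj a (by omega) b (by omega) hab
  have hsumg : ∑ z ∈ Ag ∩ Q, (rstar z (g z) : ℤ) =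
      ∑ i ∈ Finset.range k, ((y (i + 1)).card - ((y (i + 1) ∩ y i).card) : ℤ) := by
    rw [hAgQ, Finset.sum_image hinj1]
    refine Finset.sum_congr rfl (fun i hi => ?_)
    rw [Finset.mem_range] at hi
    rw [hg_path i hi, rstar_cast]
  have hsumf : ∑ z ∈ Af ∩ Q, (rstar z (f z) : ℤ) =
      ∑ i ∈ Finset.range k, ((y i).card - ((y i ∩ y (i + 1)).card) : ℤ) := by
    rw [hAfQ, Finset.sum_image hinj2]
    refine Finset.sum_congr rfl (fun i hi => ?_)
    have hfy : f (y i) = y (i + 1) := (Function.iterate_succ_apply' f i xs).symm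
    rw [hfy, rstar_cast]
  have htel : ∑ i ∈ Finset.range k, ((y i).card - ((y i ∩ y (i + 1)).card) : ℤ)
      - ∑ i ∈ Finset.range k, ((y (i + 1)).card - ((y (i + 1) ∩ y i).card) : ℤ)
      = (xs.card : ℤ) - (x.card : ℤ) := by
    rw [← Finset.sum_sub_distrib]
    have heach : ∀ i ∈ Finset.range k,
        ((y i).card - ((y i ∩ y (i + 1)).card) : ℤ)
          - ((y (i + 1)).card - ((y (i + 1) ∩ y i).card) : ℤ)
        = ((y i).card : ℤ) - ((y (i + 1)).card : ℤ) := by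
      intro i _
      rw [Finset.inter_comm (y (i + 1)) (y i)]
      ring
    rw [Finset.sum_congr rfl heach]
    rw [Finset.sum_range_sub' (fun i => ((y i).card : ℤ))]
    rw [hy0, hk]
  rw [hsplitg, hsplitf, Finset.sum_congr rfl hoffsum, hdiffeq, hsumg, hsumf]
  have := htel
  linarith

/-- If `x` has strictly fewer projects than the maximal state `xs`, then `xs`
has strictly smaller stochastic potential. -/
lemma potential_lt_of_card_lt (x xs : Finset P) (hx : MaximalState w t x)
    (hxs : MaximalState w t xs) (hcard : x.card < xs.card) :
    potential w t xs < potential w t x := by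
  classical
  have hneS : {n : ℕ | ∃ f, IsTree w t x f ∧ treeRes w t x f = n}.Nonempty :=
    ⟨treeRes w t x (fun _ => x), fun _ => x, ⟨rfl, fun z hz => ⟨hx, 1, by simp⟩⟩, rfl⟩
  obtain ⟨f, hf, hres⟩ := Nat.sInf_mem hneS
  have hne : xs ≠ x := by
    intro h
    rw [h] at hcard
    omega
  obtain ⟨g, hg, hsum⟩ := reroute_tree w t x xs hxs hne f hf
  have h1 : potential w t xs ≤ treeRes w t xs g := Nat.sInf_le ⟨g, hg, rfl⟩
  have h2 : treeRes w t xs g < treeRes w t x f := by omega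
  calc potential w t xs ≤ treeRes w t xs g := h1
    _ < treeRes w t x f := h2
    _ = potential w t x := hres

end ParetoAux

/-- Under Assumption (v1) (aggregate utility of any feasible state equals its
number of projects), every stochastically stable state is Pareto efficient. -/
theorem stochStable_pareto_efficient {N P : Type} [Fintype N] [Fintype P]
    (w : N → ℕ) (t : P → N → ℕ) (mem : P → Finset N) (u : N → Finset P → ℝ)
    (hv0 : V0 w t mem u)
    (hv1 : ∀ x : Finset P, Feasible w t x → (∑ i, u i x) = (x.card : ℝ)) :
    ∀ x : Finset P, StochStable w t x →
      ¬ ∃ y : Finset P, Feasible w t y ∧ (∀ i, u i x ≤ u i y) ∧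
        ∃ j, u j x < u j y := by
  rintro x hx ⟨y, hyf, hle, j, hlt⟩
  have hxf : Feasible w t x := hx.1.1
  have hsum : (x.card : ℝ) < (y.card : ℝ) := by
    rw [← hv1 x hxf, ← hv1 y hyf]
    exact Finset.sum_lt_sum (fun i _ => hle i) ⟨j, Finset.mem_univ j, hlt⟩
  have hcardxy : x.card < y.card := by exact_mod_cast hsum
  obtain ⟨m, hym, hmmax⟩ := exists_maximal_ext w t y hyf
  have hcard : x.card < m.card := lt_of_lt_of_le hcardxy (Finset.card_le_card hym)
  have h1 := potential_lt_of_card_lt w t x m hx.1 hmmax hcard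
  have h2 := hx.2 m hmmax
  omega
end TF
end
end

section
/- Under Assumptions (t1) (each project requires exactly one unit of time from each member) and (v2) (each agent's utility is v > 0 times the number of projects she participates in), the set of coalitionally stable states equals the set of myopically team-wise stable states: CS = MTS. -/
open scoped Classical

noncomputable section

namespace TF

/-- Under Assumptions (t1) and (v2), coalitional stability coincides with
myopic team-wise stability: `CS = MTS`. -/
theorem cs_eq_mts {N P : Type} (w : N → ℕ) (t : P → N → ℕ)
    (mem : P → Finset N) (u : N → Finset P → ℝ) (v : ℝ)
    (hmem : ∀ p, (mem p).Nonempty)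
    (ht1 : ∀ p i, t p i = if i ∈ mem p then 1 else 0)
    (hv : 0 < v)
    (hv2 : ∀ i (x : Finset P), u i x = v * ((x.filter fun p => i ∈ mem p).card : ℝ)) :
    ∀ x : Finset P, CSc w t mem u 0 x ↔ MTS w t mem u x := by
  have key : ∀ i (s : Finset P), (∑ p ∈ s, t p i) = ((s.filter fun p => i ∈ mem p).card) := by
    intro i s
    rw [Finset.card_filter]
    exact Finset.sum_congr rfl fun p _ => ht1 p i
  intro x
  constructor
  · rintro ⟨hfx, hnb⟩
    refine ⟨hfx, ?_, ?_⟩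
    · intro p hp i hi
      rw [hv2, hv2]
      have hc : ((x.erase p).filter fun q => i ∈ mem q).card ≤
          (x.filter fun q => i ∈ mem q).card :=
        Finset.card_le_card (Finset.filter_subset_filter _ (Finset.erase_subset _ _))
      have : (((x.erase p).filter fun q => i ∈ mem q).card : ℝ) ≤
          ((x.filter fun q => i ∈ mem q).card : ℝ) := by exact_mod_cast hc
      nlinarith
    · rintro ⟨p, hpx, hpf, hmono⟩
      have hx' : (x \ (∅ : Finset P)) ∪ {p} = insert p x := by
        rw [Finset.sdiff_empty, Finset.union_comm, ← Finset.insert_eq]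
      refine hnb ⟨mem p, ∅, {p}, hmem p, by simp, by simp, by simpa using hpx,
        by simpa using fun i hi => hi, by rwa [hx'], ?_⟩
      intro i hi
      rw [hx']
      simpa using hmono i hi
  · rintro ⟨hfx, hdel, hadd⟩
    refine ⟨hfx, ?_⟩
    rintro ⟨C, y, z, hCne, hyx, hy, hznx, hzC, hfx', himp⟩
    set x' := (x \ y) ∪ z with hx'def
    have hcount : ∀ i ∈ C, (x.filter fun p => i ∈ mem p).card <
        (x'.filter fun p => i ∈ mem p).card := by
      intro i hi
      have h := himp i hi
      rw [hv2, hv2] at h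
      have h2 : v * ((x.filter fun p => i ∈ mem p).card : ℝ) <
          v * ((x'.filter fun p => i ∈ mem p).card : ℝ) := by linarith
      exact_mod_cast (mul_lt_mul_iff_right₀ hv).mp h2
    obtain ⟨i0, hi0⟩ := hCne
    have hzne : z.Nonempty := by
      by_contra h
      have hz : z = ∅ := Finset.not_nonempty_iff_eq_empty.mp h
      have hsub : x' ⊆ x := by
        rw [hx'def, hz]; simpa using Finset.sdiff_subset
      have := Finset.card_le_card (Finset.filter_subset_filter
        (fun p => i0 ∈ mem p) hsub)
      exact absurd (hcount i0 hi0) (not_lt.mpr this)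
    obtain ⟨p, hpz⟩ := hzne
    have hpx : p ∉ x := hznx p hpz
    have hfeas : Feasible w t (insert p x) := by
      intro i
      rw [key]
      by_cases hip : i ∈ mem p
      · have hiC : i ∈ C := hzC p hpz i hip
        have h1 : ((insert p x).filter fun q => i ∈ mem q) =
            insert p (x.filter fun q => i ∈ mem q) := by
          rw [Finset.filter_insert, if_pos hip]
        rw [h1, Finset.card_insert_of_notMem
          (fun h => hpx (Finset.mem_filter.mp h).1)]
        have h2 := hcount i hiC
        have h3 := hfx' i
        rw [key] at h3
        omega
      · have h1 : ((insert p x).filter fun q => i ∈ mem q) =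
            x.filter fun q => i ∈ mem q := by
          rw [Finset.filter_insert, if_neg hip]
        rw [h1, ← key]
        exact hfx i
    apply hadd
    refine ⟨p, hpx, hfeas, ?_⟩
    intro i hi
    rw [hv2, hv2]
    have h1 : ((insert p x).filter fun q => i ∈ mem q) =
        insert p (x.filter fun q => i ∈ mem q) := by
      rw [Finset.filter_insert, if_pos hi]
    have h2 : ((insert p x).filter fun q => i ∈ mem q).card =
        (x.filter fun q => i ∈ mem q).card + 1 := by
      rw [h1, Finset.card_insert_of_notMem
        (fun h => hpx (Finset.mem_filter.mp h).1)]
    rw [h2]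
    have : ((x.filter fun q => i ∈ mem q).card : ℝ) <
        ((x.filter fun q => i ∈ mem q).card + 1 : ℕ) := by
      push_cast; linarith
    nlinarith
end TF
end
end

section
/- In the coalition-wise dynamics with high switching costs (c ≥ c̄) and a uniform (destructive) perturbation scheme, the stochastically stable states are exactly the feasible states with the maximum number of projects: SS(c) = L. -/
open scoped Classical

noncomputable section

namespace TF

/-! ### Auxiliary lemmas -/

lemma rstar_key {P : Type} (y z : Finset P) :
    rstar y z + z.card = rstar z y + y.card := by
  have h1 : (y ∩ z).card ≤ y.card := Finset.card_le_card Finset.inter_subset_left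
  have h2 : (z ∩ y).card ≤ z.card := Finset.card_le_card Finset.inter_subset_left
  have h3 : (y ∩ z).card = (z ∩ y).card := by rw [Finset.inter_comm]
  unfold rstar
  omega

lemma aux_feasible_empty {N P : Type} (w : N → ℕ) (t : P → N → ℕ) :
    Feasible w t (∅ : Finset P) := by
  intro i; simp

lemma aux_maxProjects_maximal {N P : Type} (w : N → ℕ) (t : P → N → ℕ)
    (x : Finset P) (h : MaxProjects w t x) : MaximalState w t x :=
  ⟨h.1, fun y hy hxy => Finset.eq_of_subset_of_card_le hxy (h.2 y hy)⟩

lemma aux_exists_maxProjects {N P : Type} [Fintype P] (w : N → ℕ) (t : P → N → ℕ) :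
    ∃ x : Finset P, MaxProjects w t x := by
  obtain ⟨x, hx, hmax⟩ := Finset.exists_max_image
    (Finset.univ.filter fun z : Finset P => Feasible w t z) Finset.card
    ⟨∅, by simp [aux_feasible_empty w t]⟩
  simp only [Finset.mem_filter, Finset.mem_univ, true_and] at hx
  exact ⟨x, hx, fun y hy => hmax y (by simp [hy])⟩

lemma aux_tree_const {N P : Type} (w : N → ℕ) (t : P → N → ℕ) (root : Finset P)
    (hroot : MaximalState w t root) : IsTree w t root (fun _ => root) := by
  refine ⟨rfl, fun y _ => ⟨hroot, 1, ?_⟩⟩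
  simp

lemma aux_potential_mem {N P : Type} [Fintype P] (w : N → ℕ) (t : P → N → ℕ)
    (root : Finset P) (hroot : MaximalState w t root) :
    ∃ f, IsTree w t root f ∧ treeRes w t root f = potential w t root := by
  have hne : { n : ℕ | ∃ f, IsTree w t root f ∧ treeRes w t root f = n }.Nonempty :=
    ⟨treeRes w t root (fun _ => root), fun _ => root, aux_tree_const w t root hroot, rfl⟩
  exact Nat.sInf_mem hne

lemma aux_potential_le {N P : Type} [Fintype P] (w : N → ℕ) (t : P → N → ℕ)
    (root : Finset P) (f : Finset P → Finset P) (h : IsTree w t root f) :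
    potential w t root ≤ treeRes w t root f :=
  Nat.sInf_le ⟨f, h, rfl⟩

/-- Re-rooting a minimum-resistance tree: moving the root from `root` to `x`
changes the total resistance by `|root| - |x|`. -/
lemma aux_reroot {N P : Type} [Fintype P] (w : N → ℕ) (t : P → N → ℕ) :
    ∀ k : ℕ, ∀ (f : Finset P → Finset P) (root x : Finset P),
    MaximalState w t root → MaximalState w t x → IsTree w t root f →
    f^[k] x = root →
    ∃ g, IsTree w t x g ∧
      treeRes w t x g + x.card ≤ treeRes w t root f + root.card := by
  intro k
  induction k using Nat.strong_induction_on with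
  | _ k ih =>
    intro f root x hroot hx hf hk
    rcases k with _ | k
    · simp only [Function.iterate_zero_apply] at hk
      subst hk
      exact ⟨f, hf, le_rfl⟩
    · set z := f^[k] x with hz
      by_cases hzr : z = root
      · exact ih k (Nat.lt_succ_self k) f root x hroot hx hf (by rw [← hz, hzr])
      have hfz : f z = root := by
        rw [hz, ← Function.iterate_succ_apply' f k x]; exact hk
      have hiter : ∀ m (y : Finset P), MaximalState w t y →
          MaximalState w t (f^[m] y) := by
        intro m
        induction m with
        | zero => intro y hy; simpa using hy
        | succ m ihm =>
          intro y hy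
          rw [Function.iterate_succ_apply']
          exact (hf.2 _ (ihm y hy)).1
      have hzmax : MaximalState w t z := hiter k x hx
      have hroot_fix : ∀ m, f^[m] root = root := fun m =>
        Function.iterate_fixed hf.1 m
      have havoid : ∀ j, j ≤ k → f^[j] x ≠ root := by
        intro j hj h
        apply hzr
        have h2 : f^[k] x = f^[k - j] (f^[j] x) := by
          rw [← Function.iterate_add_apply, Nat.sub_add_cancel hj]
        rw [hz, h2, h, hroot_fix]
      have havoidz : ∀ j, j < k → f^[j] x ≠ z := by
        intro j hj h
        apply havoid (j + 1) hj
        rw [Function.iterate_succ_apply', h, hfz]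
      set f' : Finset P → Finset P :=
        fun y => if y = z ∨ y = root then z else f y with hf'
      have hf'z : f' z = z := by simp [hf']
      have hf'root : f' root = z := by simp [hf']
      have haux : ∀ m (y : Finset P), f^[m] y = root → ∃ m', f'^[m'] y = z := by
        intro m
        induction m with
        | zero =>
          intro y hy
          simp only [Function.iterate_zero_apply] at hy
          subst hy
          exact ⟨1, by simpa using hf'root⟩
        | succ m ihm =>
          intro y hy
          by_cases h : y = z ∨ y = root
          · rcases h with h | h
            · exact ⟨0, by simpa using h⟩
            · subst h; exact ⟨1, by simpa using hf'root⟩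
          · obtain ⟨m', hm'⟩ := ihm (f y)
              (by rw [← Function.iterate_succ_apply]; exact hy)
            refine ⟨m' + 1, ?_⟩
            rw [Function.iterate_succ_apply]
            have he : f' y = f y := by simp only [hf']; rw [if_neg h]
            rw [he]; exact hm'
      have htree' : IsTree w t z f' := by
        constructor
        · exact hf'z
        · intro y hy
          constructor
          · by_cases h : y = z ∨ y = root
            · have : f' y = z := by simp only [hf']; rw [if_pos h]
              rw [this]; exact hzmax
            · have : f' y = f y := by simp only [hf']; rw [if_neg h]
              rw [this]; exact (hf.2 y hy).1
          · obtain ⟨m, hm⟩ := (hf.2 y hy).2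
            exact haux m y hm
      have hpath : ∀ j, j ≤ k → f'^[j] x = f^[j] x := by
        intro j hj
        induction j with
        | zero => rfl
        | succ j ihj =>
          have hj' : j ≤ k := Nat.le_of_succ_le hj
          rw [Function.iterate_succ_apply', Function.iterate_succ_apply',
            ihj hj']
          have h1 : f^[j] x ≠ root := havoid j hj'
          have h2 : f^[j] x ≠ z := havoidz j hj
          simp only [hf']
          rw [if_neg (by tauto)]
      have hk' : f'^[k] x = z := by rw [hpath k le_rfl, ← hz]
      obtain ⟨g, hg, hgres⟩ :=
        ih k (Nat.lt_succ_self k) f' z x hzmax hx htree' hk'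
      refine ⟨g, hg, ?_⟩
      have hsum : treeRes w t z f' + z.card = treeRes w t root f + root.card := by
        classical
        set A : Finset (Finset P) :=
          Finset.univ.filter
            (fun y : Finset P => MaximalState w t y ∧ y ≠ z ∧ y ≠ root) with hA
        have hrootA : root ∉ A := by simp [hA]
        have hzA : z ∉ A := by simp [hA]
        have hs1 : Finset.univ.filter
            (fun y : Finset P => MaximalState w t y ∧ y ≠ z) = insert root A := by
          ext y
          simp only [hA, Finset.mem_filter, Finset.mem_univ, true_and,
            Finset.mem_insert]
          constructor
          · rintro ⟨hy, hyz⟩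
            by_cases h : y = root
            · exact Or.inl h
            · exact Or.inr ⟨hy, hyz, h⟩
          · rintro (rfl | ⟨hy, hyz, _⟩)
            · exact ⟨hroot, fun h => hzr h.symm⟩
            · exact ⟨hy, hyz⟩
        have hs2 : Finset.univ.filter
            (fun y : Finset P => MaximalState w t y ∧ y ≠ root) = insert z A := by
          ext y
          simp only [hA, Finset.mem_filter, Finset.mem_univ, true_and,
            Finset.mem_insert]
          constructor
          · rintro ⟨hy, hyr⟩
            by_cases h : y = z
            · exact Or.inl h
            · exact Or.inr ⟨hy, h, hyr⟩
          · rintro (rfl | ⟨hy, _, hyr⟩)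
            · exact ⟨hzmax, hzr⟩
            · exact ⟨hy, hyr⟩
        have hcong : ∀ y ∈ A, rstar y (f' y) = rstar y (f y) := by
          intro y hy
          simp only [hA, Finset.mem_filter, Finset.mem_univ, true_and] at hy
          have : f' y = f y := by
            simp only [hf']; rw [if_neg (by tauto)]
          rw [this]
        have e1 : treeRes w t z f'
            = rstar root z + ∑ y ∈ A, rstar y (f y) := by
          unfold treeRes
          rw [hs1, Finset.sum_insert hrootA, hf'root,
            Finset.sum_congr rfl hcong]
        have e2 : treeRes w t root f
            = rstar z root + ∑ y ∈ A, rstar y (f y) := by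
          unfold treeRes
          rw [hs2, Finset.sum_insert hzA, hfz]
        have hkey := rstar_key root z
        omega
      omega

lemma aux_potential_add_card {N P : Type} [Fintype P] (w : N → ℕ) (t : P → N → ℕ)
    (x y : Finset P) (hx : MaximalState w t x) (hy : MaximalState w t y) :
    potential w t x + x.card ≤ potential w t y + y.card := by
  obtain ⟨f, hf, hfres⟩ := aux_potential_mem w t y hy
  obtain ⟨k, hk⟩ := (hf.2 x hx).2
  obtain ⟨g, hg, hgres⟩ := aux_reroot w t k f y x hy hx hf hk
  have := aux_potential_le w t x g hg
  omega

/-- In the coalition-wise dynamics with high switching costs and a uniform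
(destructive) perturbation scheme, the stochastically stable states are
exactly the feasible states with the maximum number of projects:
`SS(c) = L`. -/
theorem coalition_stochStable_iff_maxProjects {N P : Type} [Fintype P]
    (w : N → ℕ) (t : P → N → ℕ) (mem : P → Finset N) (u : N → Finset P → ℝ)
    (hv0 : V0 w t mem u) (c : ℝ) (hc0 : 0 ≤ c)
    (hhigh : ∀ (x : Finset P) (C : Finset N) (y z : Finset P), Feasible w t x →
      Blocking w t mem u 0 x C y z →
      ∃ i ∈ C, u i ((x \ y) ∪ z) - u i x ≤ c) :
    ∀ x : Finset P, StochStable w t x ↔ MaxProjects w t x := by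
  intro x
  constructor
  · rintro ⟨hxmax, hmin⟩
    obtain ⟨x0, hx0⟩ := aux_exists_maxProjects w t
    have hx0m := aux_maxProjects_maximal w t x0 hx0
    have h1 := hmin x0 hx0m
    have h2 := aux_potential_add_card w t x0 x hx0m hxmax
    have h3 := aux_potential_add_card w t x x0 hxmax hx0m
    refine ⟨hxmax.1, fun y hy => ?_⟩
    have h4 := hx0.2 y hy
    omega
  · intro hx
    have hxm := aux_maxProjects_maximal w t x hx
    refine ⟨hxm, fun y hy => ?_⟩
    have h2 := aux_potential_add_card w t x y hxm hy
    have h3 := hx.2 y hy.1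
    omega
end TF
end
end

section
/- In the marriage/matching special case (all projects are pairs, each agent's endowment is 1), maximal states are exactly maximal matchings of the feasibility graph, and the stochastically stable states are exactly the maximum-cardinality matchings. -/
open scoped Classical

noncomputable section

namespace TF

/-!
Under unit endowments and unit contributions an agent can belong to at most one project, so
feasible states are the matchings of the hypergraph of teams, and maximal states the maximal
matchings.

For stochastic stability, let `f` be a tree rooted at `r` and `c` a child of `r`. Redirecting
`r` to `c` and making `c` the root turns the edge `c → r` into `r → c`, and
`rstar r c - rstar c r = |r| - |c|`. Moving the root step by step along the path from any maximal
`m` to `r` shows that `potential x + |x|` is the same for every maximal state `x`. So the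
potential is minimal exactly where the number of projects is maximal.
-/

section Feasibility

variable {N P : Type} (w : N → ℕ) (t : P → N → ℕ)

lemma feasible_empty : Feasible w t ∅ := fun i => by simp

lemma exists_maxProjects [Fintype P] : ∃ x, MaxProjects w t x := by
  obtain ⟨x, hx, hmax⟩ := Finset.exists_max_image (Finset.univ.filter (Feasible w t))
    Finset.card ⟨∅, Finset.mem_filter.mpr ⟨Finset.mem_univ _, feasible_empty w t⟩⟩
  exact ⟨x, (Finset.mem_filter.mp hx).2,
    fun y hy => hmax y (Finset.mem_filter.mpr ⟨Finset.mem_univ y, hy⟩)⟩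

variable {w t}

lemma Feasible.mono {x y : Finset P} (hy : Feasible w t y) (hxy : x ⊆ y) : Feasible w t x :=
  fun i => (Finset.sum_le_sum_of_subset hxy).trans (hy i)

lemma maximalState_iff_forall_insert {x : Finset P} :
    MaximalState w t x ↔ Feasible w t x ∧ ∀ p ∉ x, ¬ Feasible w t (insert p x) := by
  refine ⟨fun ⟨hx, hmax⟩ => ⟨hx, fun p hp hins => ?_⟩,
    fun ⟨hx, hins⟩ => ⟨hx, fun y hy hxy => ?_⟩⟩
  · exact hp (hmax _ hins (Finset.subset_insert p x) ▸ Finset.mem_insert_self p x)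
  · by_contra hne
    obtain ⟨p, hpy, hpx⟩ := Finset.exists_of_ssubset (hxy.ssubset_of_ne hne)
    exact hins p hpx (hy.mono (Finset.insert_subset hpy hxy))

lemma MaxProjects.maximalState {x : Finset P} (hx : MaxProjects w t x) : MaximalState w t x :=
  ⟨hx.1, fun y hy hxy => Finset.eq_of_subset_of_card_le hxy (hx.2 y hy)⟩

end Feasibility

section Potential

variable {N P : Type} {w : N → ℕ} {t : P → N → ℕ}

lemma rstar_add_card (a b : Finset P) : rstar a b + b.card = rstar b a + a.card := by
  have ha : (a ∩ b).card ≤ a.card := Finset.card_le_card Finset.inter_subset_left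
  have hb : (a ∩ b).card ≤ b.card := Finset.card_le_card Finset.inter_subset_right
  rw [rstar, rstar, Finset.inter_comm b a]
  omega

lemma iterate_eq_iterate_of_eq_on_orbit {α : Type} {f g : α → α} {x : α} :
    ∀ k, (∀ j < k, g (f^[j] x) = f (f^[j] x)) → g^[k] x = f^[k] x
  | 0, _ => rfl
  | k + 1, h => by
    rw [Function.iterate_succ_apply', Function.iterate_succ_apply',
      iterate_eq_iterate_of_eq_on_orbit k fun j hj => h j (by omega), h k k.lt_succ_self]

lemma iterate_eq_of_iterate_eq_fixedPoint {α : Type} {f : α → α} {x r : α} (hr : f r = r)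
    {j k : ℕ} (hjk : j ≤ k) (hj : f^[j] x = r) : f^[k] x = r := by
  rw [← Nat.sub_add_cancel hjk, Function.iterate_add_apply, hj, Function.iterate_fixed hr]

lemma IsTree.maximalState_iterate {r y : Finset P} {f : Finset P → Finset P}
    (hf : IsTree w t r f) (hy : MaximalState w t y) (j : ℕ) : MaximalState w t (f^[j] y) := by
  induction j with
  | zero => exact hy
  | succ j ih => rw [Function.iterate_succ_apply']; exact (hf.2 _ ih).1

lemma treeRes_eq_rstar_add [Fintype P] {r c : Finset P} (f : Finset P → Finset P)
    (hc : MaximalState w t c) (hcr : c ≠ r) :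
    treeRes w t r f = rstar c (f c) + ∑ y ∈ Finset.univ.filter
      (fun y => MaximalState w t y ∧ y ∉ ({r, c} : Finset (Finset P))), rstar y (f y) := by
  have hsplit : Finset.univ.filter (fun y => MaximalState w t y ∧ y ≠ r) = insert c
      (Finset.univ.filter fun y => MaximalState w t y ∧ y ∉ ({r, c} : Finset (Finset P))) := by
    ext y
    by_cases hyc : y = c <;> simp_all
  rw [treeRes, hsplit, Finset.sum_insert (by simp)]

def rerootAtChild (f : Finset P → Finset P) (r c : Finset P) : Finset P → Finset P :=
  fun y => if y = r ∨ y = c then c else f y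

lemma rerootAtChild_of_ne {f : Finset P → Finset P} {r c y : Finset P} (hr : y ≠ r)
    (hc : y ≠ c) : rerootAtChild f r c y = f y :=
  if_neg (not_or.mpr ⟨hr, hc⟩)

lemma rerootAtChild_root (f : Finset P → Finset P) (r c : Finset P) :
    rerootAtChild f r c r = c :=
  if_pos (Or.inl rfl)

lemma rerootAtChild_self (f : Finset P → Finset P) (r c : Finset P) :
    rerootAtChild f r c c = c :=
  if_pos (Or.inr rfl)

lemma IsTree.isTree_rerootAtChild {r c : Finset P} {f : Finset P → Finset P}
    (hf : IsTree w t r f) (hc : MaximalState w t c) : IsTree w t c (rerootAtChild f r c) := by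
  have hreach : ∀ k y, f^[k] y = r → ∃ n, (rerootAtChild f r c)^[n] y = c := by
    intro k
    induction k with
    | zero => exact fun y hy => ⟨1, by simp [← hy, rerootAtChild_root]⟩
    | succ k ih =>
      intro y hy
      obtain ⟨n, hn⟩ := ih (f y) hy
      by_cases hyr : y = r
      · exact ⟨1, by simp [hyr, rerootAtChild_root]⟩
      by_cases hyc : y = c
      · exact ⟨0, hyc⟩
      exact ⟨n + 1, by rwa [Function.iterate_succ_apply, rerootAtChild_of_ne hyr hyc]⟩
  refine ⟨rerootAtChild_self f r c, fun y hy => ⟨?_, ?_⟩⟩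
  · by_cases hyr : y = r
    · rwa [hyr, rerootAtChild_root]
    by_cases hyc : y = c
    · rwa [hyc, rerootAtChild_self]
    rw [rerootAtChild_of_ne hyr hyc]
    exact (hf.2 y hy).1
  · obtain ⟨k, hk⟩ := (hf.2 y hy).2
    exact hreach k y hk

lemma IsTree.treeRes_rerootAtChild [Fintype P] {r c : Finset P} {f : Finset P → Finset P}
    (hf : IsTree w t r f) (hc : MaximalState w t c) (hcr : f c = r) (hne : c ≠ r) :
    treeRes w t c (rerootAtChild f r c) + c.card = treeRes w t r f + r.card := by
  have hr : MaximalState w t r := hcr ▸ (hf.2 c hc).1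
  rw [treeRes_eq_rstar_add f hc hne, treeRes_eq_rstar_add _ hr hne.symm, Finset.pair_comm,
    rerootAtChild_root, hcr]
  have hoff : ∑ y ∈ Finset.univ.filter
      (fun y => MaximalState w t y ∧ y ∉ ({r, c} : Finset (Finset P))),
      rstar y (rerootAtChild f r c y) = ∑ y ∈ Finset.univ.filter
      (fun y => MaximalState w t y ∧ y ∉ ({r, c} : Finset (Finset P))), rstar y (f y) :=
    Finset.sum_congr rfl fun y hy => by
      simp only [Finset.mem_filter, Finset.mem_univ, true_and, Finset.mem_insert,
        Finset.mem_singleton, not_or] at hy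
      rw [rerootAtChild_of_ne hy.2.1 hy.2.2]
  have := rstar_add_card r c
  omega

lemma exists_isTree_of_iterate_eq_root [Fintype P] {m : Finset P} (hm : MaximalState w t m) :
    ∀ (k : ℕ) (r : Finset P) (f : Finset P → Finset P), IsTree w t r f → f^[k] m = r →
      ∃ g, IsTree w t m g ∧ treeRes w t m g + m.card = treeRes w t r f + r.card := by
  intro k
  induction k with
  | zero => rintro r f hf rfl; exact ⟨f, hf, rfl⟩
  | succ k ih =>
    intro r f hf hk
    set c := f^[k] m
    have hcr : f c = r := by rw [← hk, Function.iterate_succ_apply']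
    by_cases hne : c = r
    · exact ih r f hf hne
    have hc : MaximalState w t c := hf.maximalState_iterate hm k
    -- Before step `k` the orbit of `m` avoids `r` and `c`, since both lead to the fixed point `r`.
    have horbit : ∀ j < k, f^[j] m ≠ r ∧ f^[j] m ≠ c := fun j hj =>
      ⟨fun h => hne (iterate_eq_of_iterate_eq_fixedPoint hf.1 hj.le h),
       fun h => hne (iterate_eq_of_iterate_eq_fixedPoint hf.1 hj <| by
         rw [Function.iterate_succ_apply', h, hcr])⟩
    have hgk : (rerootAtChild f r c)^[k] m = c := iterate_eq_iterate_of_eq_on_orbit k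
      fun j hj => rerootAtChild_of_ne (horbit j hj).1 (horbit j hj).2
    obtain ⟨g, hg, hres⟩ := ih c _ (hf.isTree_rerootAtChild hc) hgk
    exact ⟨g, hg, hres.trans (hf.treeRes_rerootAtChild hc hcr hne)⟩

lemma exists_isTree_treeRes_eq_potential [Fintype P] {r : Finset P} (hr : MaximalState w t r) :
    ∃ f, IsTree w t r f ∧ treeRes w t r f = potential w t r :=
  Nat.sInf_mem (s := {n | ∃ f, IsTree w t r f ∧ treeRes w t r f = n})
    ⟨_, fun _ => r, ⟨rfl, fun _ _ => ⟨hr, 1, rfl⟩⟩, rfl⟩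

lemma potential_add_card_le [Fintype P] {a b : Finset P} (ha : MaximalState w t a)
    (hb : MaximalState w t b) : potential w t a + a.card ≤ potential w t b + b.card := by
  obtain ⟨f, hf, hfb⟩ := exists_isTree_treeRes_eq_potential hb
  obtain ⟨k, hk⟩ := (hf.2 a ha).2
  obtain ⟨g, hg, hres⟩ := exists_isTree_of_iterate_eq_root ha k b f hf hk
  have : potential w t a ≤ treeRes w t a g := Nat.sInf_le ⟨g, hg, rfl⟩
  omega

lemma potential_add_card_eq [Fintype P] {a b : Finset P} (ha : MaximalState w t a)
    (hb : MaximalState w t b) : potential w t a + a.card = potential w t b + b.card :=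
  (potential_add_card_le ha hb).antisymm (potential_add_card_le hb ha)

theorem stochStable_iff_maxProjects [Fintype P] {x : Finset P} :
    StochStable w t x ↔ MaxProjects w t x := by
  constructor
  · rintro ⟨hx, hpot⟩
    obtain ⟨m, hm⟩ := exists_maxProjects w t
    have := potential_add_card_eq hx hm.maximalState
    have := hpot m hm.maximalState
    exact ⟨hx.1, fun y hy => (hm.2 y hy).trans (by omega)⟩
  · intro hx
    refine ⟨hx.maximalState, fun y hy => ?_⟩
    have := potential_add_card_eq hx.maximalState hy
    have := hx.2 y hy.1
    omega

end Potential

section Matching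

variable {N P : Type} {w : N → ℕ} {t : P → N → ℕ} {mem : P → Finset N}

lemma sum_eq_card_filter_mem (ht : ∀ p i, t p i = if i ∈ mem p then 1 else 0) (x : Finset P)
    (i : N) : ∑ p ∈ x, t p i = (x.filter (fun p => i ∈ mem p)).card := by
  simp only [ht, Finset.sum_boole, Nat.cast_id]

lemma feasible_iff_pairwise_disjoint (ht : ∀ p i, t p i = if i ∈ mem p then 1 else 0)
    (hw : ∀ i, w i = 1) (x : Finset P) :
    Feasible w t x ↔ (x : Set P).Pairwise fun p q => Disjoint (mem p) (mem q) := by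
  simp only [Feasible, sum_eq_card_filter_mem ht, hw, Finset.card_le_one, Finset.mem_filter,
    Set.Pairwise, Finset.mem_coe, Finset.disjoint_left]
  exact ⟨fun h p hp q hq hpq i hip hiq => hpq (h i p ⟨hp, hip⟩ q ⟨hq, hiq⟩),
    fun h i p hp q hq => by_contra fun hpq => h hp.1 hq.1 hpq hp.2 hq.2⟩

lemma maximalState_iff_pairwise_disjoint (ht : ∀ p i, t p i = if i ∈ mem p then 1 else 0)
    (hw : ∀ i, w i = 1) (x : Finset P) :
    MaximalState w t x ↔ (x : Set P).Pairwise (fun p q => Disjoint (mem p) (mem q)) ∧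
      ∀ p ∉ x, ∃ q ∈ x, ¬ Disjoint (mem p) (mem q) := by
  rw [maximalState_iff_forall_insert, feasible_iff_pairwise_disjoint ht hw x]
  refine and_congr_right fun hx => forall₂_congr fun p hp => ?_
  rw [feasible_iff_pairwise_disjoint ht hw, Finset.coe_insert,
    Set.pairwise_insert_of_notMem (Finset.mem_coe.not.mpr hp)]
  simp only [disjoint_comm (a := mem _) (b := mem p), and_self, hx, true_and, not_forall,
    Finset.mem_coe, exists_prop]

end Matching

theorem matching_special_case_general {N P : Type} [Fintype P]
    (w : N → ℕ) (t : P → N → ℕ) (mem : P → Finset N)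
    (ht : ∀ p i, t p i = if i ∈ mem p then 1 else 0)
    (hw : ∀ i, w i = 1) :
    (∀ x : Finset P, Feasible w t x ↔
      (x : Set P).Pairwise fun p q => Disjoint (mem p) (mem q)) ∧
    (∀ x : Finset P, MaximalState w t x ↔
      ((x : Set P).Pairwise (fun p q => Disjoint (mem p) (mem q)) ∧
        ∀ p ∉ x, ∃ q ∈ x, ¬ Disjoint (mem p) (mem q))) ∧
    (∀ x : Finset P, StochStable w t x ↔
      ((x : Set P).Pairwise (fun p q => Disjoint (mem p) (mem q)) ∧
        ∀ y : Finset P, (y : Set P).Pairwise (fun p q => Disjoint (mem p) (mem q)) →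
          y.card ≤ x.card)) := by
  refine ⟨feasible_iff_pairwise_disjoint ht hw, maximalState_iff_pairwise_disjoint ht hw,
    fun x => ?_⟩
  simp only [stochStable_iff_maxProjects, MaxProjects, feasible_iff_pairwise_disjoint ht hw]

/-- In the marriage/matching special case (all projects are pairs, unit time
contributions, unit endowments): feasible states are exactly matchings,
maximal states are exactly maximal matchings, and stochastically stable
states are exactly maximum-cardinality matchings. -/
theorem matching_special_case {N P : Type} [Fintype N] [Fintype P]
    (w : N → ℕ) (t : P → N → ℕ) (mem : P → Finset N) (u : N → Finset P → ℝ)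
    (hs2 : ∀ p, (mem p).card = 2)
    (ht : ∀ p i, t p i = if i ∈ mem p then 1 else 0)
    (hw : ∀ i, w i = 1)
    (hinj : ∀ p q, mem p = mem q → p = q)
    (hv0 : V0 w t mem u) :
    (∀ x : Finset P, Feasible w t x ↔
      (x : Set P).Pairwise fun p q => Disjoint (mem p) (mem q)) ∧
    (∀ x : Finset P, MaximalState w t x ↔
      ((x : Set P).Pairwise (fun p q => Disjoint (mem p) (mem q)) ∧
        ∀ p ∉ x, ∃ q ∈ x, ¬ Disjoint (mem p) (mem q))) ∧
    (∀ x : Finset P, StochStable w t x ↔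
      ((x : Set P).Pairwise (fun p q => Disjoint (mem p) (mem q)) ∧
        ∀ y : Finset P, (y : Set P).Pairwise (fun p q => Disjoint (mem p) (mem q)) →
          y.card ≤ x.card)) :=
  matching_special_case_general w t mem ht hw

end TF
end
end
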